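/- In the polynomial ring C[x1,x2,x3], set A = (3*x2 + 2*x3)*(5*x1*x2 - 4*x1*x3 + 9*x2*x3), B = 2*(3*x3 - 5*x1)*(5*x1*x2 + 4*x1*x3 + x2*x3), and Cc = -9*x2^2*x3 + 10*x1^2*(7*x2 + 4*x3) - 3*x1*x2*(55*x2 + 42*x3). Let F be the homogeneous polynomial of degree 9 given by F = -109000*x1^6*x2^3 + 1081500*x1^5*x2^4 - 2549250*x1^4*x2^5 + 2244375*x1^3*x2^6 - 144000*x1^6*x2^2*x3 + 2074600*x1^5*x2^3*x3 - 5674500*x1^4*x2^4*x3 + 5284350*x1^3*x2^5*x3 + 358425*x1^2*x2^6*x3 - 48000*x1^6*x2*x3^2 + 1278400*x1^5*x2^2*x3^2 - 4514680*x1^4*x2^3*x3^2 + 4652580*x1^3*x2^4*x3^2 + 312930*x1^2*x2^5*x3^2 + 3645*x1*x2^6*x3^2 + 214400*x1^5*x2*x3^3 - 1482560*x1^4*x2^2*x3^3 + 2009592*x1^3*x2^3*x3^3 - 322956*x1^2*x2^4*x3^3 - 85374*x1*x2^5*x3^3 - 9477*x2^6*x3^3 - 25600*x1^5*x3^4 -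 140800*x1^4*x2*x3^4 + 551328*x1^3*x2^2*x3^4 - 411984*x1^2*x2^3*x3^4 - 113616*x1*x2^4*x3^4 - 23328*x2^5*x3^4 + 15360*x1^4*x3^5 + 99072*x1^3*x2*x3^5 - 115776*x1^2*x2^2*x3^5 - 31104*x1*x2^3*x3^5 - 15552*x2^4*x3^5 - 6656*x1^3*x3^6 - 6912*x1^2*x2*x3^6 + 2592*x1*x2^2*x3^6 - 3024*x2^3*x3^6. Then there exists a nonzero complex number c such that 5*A*B*Cc - A^3 - B^3 - Cc^3 = c*F as polynomials in C[x1,x2,x3]. -/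
import Mathlib


open MvPolynomial

/-- The variables `x1, x2, x3`. -/
noncomputable def x1 : MvPolynomial (Fin 3) ℂ := X 0
noncomputable def x2 : MvPolynomial (Fin 3) ℂ := X 1
noncomputable def x3 : MvPolynomial (Fin 3) ℂ := X 2

/-- The degree-9 defining equation of the degeneration curve from the paper's
explicit example. -/
noncomputable def Fdeg : MvPolynomial (Fin 3) ℂ :=
  -109000*x1^6*x2^3 + 1081500*x1^5*x2^4 - 2549250*x1^4*x2^5 + 2244375*x1^3*x2^6
  - 144000*x1^6*x2^2*x3 + 2074600*x1^5*x2^3*x3 - 5674500*x1^4*x2^4*x3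
  + 5284350*x1^3*x2^5*x3 + 358425*x1^2*x2^6*x3 - 48000*x1^6*x2*x3^2
  + 1278400*x1^5*x2^2*x3^2 - 4514680*x1^4*x2^3*x3^2 + 4652580*x1^3*x2^4*x3^2
  + 312930*x1^2*x2^5*x3^2 + 3645*x1*x2^6*x3^2 + 214400*x1^5*x2*x3^3
  - 1482560*x1^4*x2^2*x3^3 + 2009592*x1^3*x2^3*x3^3 - 322956*x1^2*x2^4*x3^3
  - 85374*x1*x2^5*x3^3 - 9477*x2^6*x3^3 - 25600*x1^5*x3^4 - 140800*x1^4*x2*x3^4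
  + 551328*x1^3*x2^2*x3^4 - 411984*x1^2*x2^3*x3^4 - 113616*x1*x2^4*x3^4
  - 23328*x2^5*x3^4 + 15360*x1^4*x3^5 + 99072*x1^3*x2*x3^5 - 115776*x1^2*x2^2*x3^5
  - 31104*x1*x2^3*x3^5 - 15552*x2^4*x3^5 - 6656*x1^3*x3^6 - 6912*x1^2*x2*x3^6
  + 2592*x1*x2^2*x3^6 - 3024*x2^3*x3^6

/-- The quadratic coefficient `A = (3x2+2x3)(5x1x2-4x1x3+9x2x3)`. -/
noncomputable def Aq : MvPolynomial (Fin 3) ℂ :=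
  (3*x2 + 2*x3) * (5*x1*x2 - 4*x1*x3 + 9*x2*x3)

/-- The quadratic coefficient `B = 2(3x3-5x1)(5x1x2+4x1x3+x2x3)`. -/
noncomputable def Bq : MvPolynomial (Fin 3) ℂ :=
  2 * (3*x3 - 5*x1) * (5*x1*x2 + 4*x1*x3 + x2*x3)

/-- The quadratic coefficient `Cc = -9x2²x3 + 10x1²(7x2+4x3) - 3x1x2(55x2+42x3)`. -/
noncomputable def Cq : MvPolynomial (Fin 3) ℂ :=
  -9*x2^2*x3 + 10*x1^2*(7*x2 + 4*x3) - 3*x1*x2*(55*x2 + 42*x3)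

/-- The discriminant `5ABC - A³ - B³ - C³` of the general fibre of the conic bundle
is a nonzero scalar multiple of the degeneration polynomial `F`. -/
theorem discriminant_eq_scalar_mul_Fdeg :
    ∃ c : ℂ, c ≠ 0 ∧
      5*Aq*Bq*Cq - Aq^3 - Bq^3 - Cq^3 = MvPolynomial.C c * Fdeg := by
  refine ⟨2, two_ne_zero, ?_⟩
  rw [show MvPolynomial.C (2:ℂ) = 2 from map_ofNat _ 2]
  unfold Aq Bq Cq Fdeg x1 x2 x3
  ring
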